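/- Let y, z, μ be nonnegative reals with y + z > 0 and let λ > 0 satisfy y·λf_2(λ)/f_3(λ) + z·λf_1(λ)/f_2(λ) = 2μ. Then λ(y + z) ≤ 2μ ≤ λ(y + z)·f_2(λ)/f_3(λ). -/

import Mathlib

/-- `f k x = e^x - ∑_{i=0}^{k-1} x^i / i!`. -/
noncomputable def f (k : ℕ) (x : ℝ) : ℝ :=
  Real.exp x - ∑ i ∈ Finset.range k, x ^ i / (Nat.factorial i : ℝ)

/-- Trapezoid (Hermite–Hadamard) inequality for `exp` on `[0, x]`. -/
lemma trapezoid (x : ℝ) (hx : 0 ≤ x) : Real.exp x - 1 ≤ x * (1 + Real.exp x) / 2 := by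
  set g : ℝ → ℝ := fun t => t * (1 + Real.exp t) / 2 - (Real.exp t - 1) with hg
  have hderiv : ∀ t : ℝ, HasDerivAt g ((1 + Real.exp t) / 2 + t * Real.exp t / 2 - Real.exp t) t := by
    intro t
    have h1 : HasDerivAt (fun s : ℝ => s * (1 + Real.exp s))
        (1 * (1 + Real.exp t) + t * Real.exp t) t :=
      (hasDerivAt_id t).mul ((Real.hasDerivAt_exp t).const_add 1)
    have h2 := (h1.div_const 2).sub ((Real.hasDerivAt_exp t).sub_const 1)
    rw [show ((1 + Real.exp t) / 2 + t * Real.exp t / 2 - Real.exp t) = ((1 * (1 + Real.exp t) + t * Real.exp t) / 2 - Real.exp t) by ring]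
    exact h2
  have hmono : MonotoneOn g (Set.Ici (0:ℝ)) := by
    apply monotoneOn_of_deriv_nonneg (convex_Ici 0)
    · exact Continuous.continuousOn (by fun_prop)
    · intro t ht
      exact (hderiv t).differentiableAt.differentiableWithinAt
    · intro t ht
      rw [(hderiv t).deriv]
      have h3 : Real.exp t * (1 - t) ≤ 1 := by
        have h4 := Real.add_one_le_exp (-t)
        have h5 : Real.exp t * Real.exp (-t) = 1 := by
          rw [← Real.exp_add]; simp
        nlinarith [Real.exp_pos t]
      nlinarith
  have h0 : g 0 = 0 := by simp [hg]
  have := hmono (Set.self_mem_Ici) (Set.mem_Ici.mpr hx) hx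
  rw [h0] at this
  simp only [hg] at this
  linarith

/-- If `y, z, μ ≥ 0` with `y + z > 0` and `λ > 0` satisfies
`y λf₂(λ)/f₃(λ) + z λf₁(λ)/f₂(λ) = 2μ`, then `λ(y + z) ≤ 2μ ≤ λ(y + z) f₂(λ)/f₃(λ)`. -/
theorem lambda_bounds (y z μ lam : ℝ) (hy : 0 ≤ y) (hz : 0 ≤ z) (hμ : 0 ≤ μ)
    (hyz : 0 < y + z) (hlam : 0 < lam)
    (heq : y * (lam * f 2 lam / f 3 lam) + z * (lam * f 1 lam / f 2 lam) = 2 * μ) :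
    lam * (y + z) ≤ 2 * μ ∧ 2 * μ ≤ lam * (y + z) * f 2 lam / f 3 lam := by
  have hf1 : f 1 lam = Real.exp lam - 1 := by
    simp [f, Finset.sum_range_succ]
  have hf2 : f 2 lam = Real.exp lam - 1 - lam := by
    simp [f, Finset.sum_range_succ]; ring
  have hf3 : f 3 lam = Real.exp lam - 1 - lam - lam ^ 2 / 2 := by
    simp [f, Finset.sum_range_succ, Nat.factorial]; ring
  have hsum := Real.sum_le_exp_of_nonneg hlam.le 4
  have hsum4 : 1 + lam + lam ^ 2 / 2 + lam ^ 3 / 6 ≤ Real.exp lam := by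
    have : ∑ i ∈ Finset.range 4, lam ^ i / (Nat.factorial i : ℝ)
        = 1 + lam + lam ^ 2 / 2 + lam ^ 3 / 6 := by
      simp [Finset.sum_range_succ, Nat.factorial]
    linarith [this ▸ hsum]
  have h3pos : 0 < f 3 lam := by
    rw [hf3]; nlinarith [pow_pos hlam 3]
  have h2pos : 0 < f 2 lam := by
    rw [hf2]; rw [hf3] at h3pos; nlinarith
  have h1pos : 0 < f 1 lam := by
    rw [hf1]; rw [hf2] at h2pos; nlinarith
  -- ratios are at least 1
  have h23 : f 3 lam ≤ f 2 lam := by rw [hf2, hf3]; nlinarith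
  have h12 : f 2 lam ≤ f 1 lam := by rw [hf1, hf2]; nlinarith
  -- key: f₁ f₃ ≤ f₂²
  have hkey : f 1 lam * f 3 lam ≤ f 2 lam ^ 2 := by
    have ht := trapezoid lam hlam.le
    rw [hf1, hf2, hf3]
    nlinarith [Real.exp_pos lam]
  constructor
  · -- lower bound
    have hA : lam ≤ lam * f 2 lam / f 3 lam := by
      rw [le_div_iff₀ h3pos]; nlinarith
    have hB : lam ≤ lam * f 1 lam / f 2 lam := by
      rw [le_div_iff₀ h2pos]; nlinarith
    calc lam * (y + z) = y * lam + z * lam := by ring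
      _ ≤ y * (lam * f 2 lam / f 3 lam) + z * (lam * f 1 lam / f 2 lam) := by
          gcongr
      _ = 2 * μ := heq
  · -- upper bound
    have hC : lam * f 1 lam / f 2 lam ≤ lam * f 2 lam / f 3 lam := by
      rw [div_le_div_iff₀ h2pos h3pos]
      nlinarith
    calc 2 * μ = y * (lam * f 2 lam / f 3 lam) + z * (lam * f 1 lam / f 2 lam) := heq.symm
      _ ≤ y * (lam * f 2 lam / f 3 lam) + z * (lam * f 2 lam / f 3 lam) := by gcongr
      _ = lam * (y + z) * f 2 lam / f 3 lam := by ring
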